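/- arXiv:1009.5839 — 7 statements merged into one kernel-verified Lean document; each statement's English description precedes it below -/
import Mathlib

section
/- Let H be a Hilbert space and A, B bounded self-adjoint positive operators on H. Suppose there exists η > 0 such that ‖(A+λI)^{-1/2}(B−A)(A+λI)^{-1/2}‖ < 1 − η for some λ > 0. Then ‖(A+λI)^{1/2}(B+λI)^{-1/2}‖ ≤ 1/√η. -/
/-!
Write `S = (A+λ)^{-1/2}` and `R = (B+λ)^{-1/2}`. Since `S (B-A) S` is self-adjoint of norm at most
`1 - η`, it dominates `-(1 - η)`, so `S (B+λ) S = 1 + S (B-A) S ≥ η`. Conjugating by `S⁻¹ = (A+λ)^{1/2}`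
gives `B + λ ≥ η (A+λ)`, and conjugating by `R` gives `η R (A+λ) R ≤ 1`. As
`R (A+λ) R = T* T` for `T = (A+λ)^{1/2} R`, this says `η ‖T‖² ≤ 1`.
-/

section CStarAlgebra

variable {A : Type*} [CStarAlgebra A] [PartialOrder A] [StarOrderedRing A] {a : A} {lam : ℝ}

lemma IsSelfAdjoint.algebraMap_le_one_add {c : A} (hc : IsSelfAdjoint c) {η : ℝ}
    (h : ‖c‖ ≤ 1 - η) : algebraMap ℝ A η ≤ 1 + c := by
  have hneg : -algebraMap ℝ A (1 - η) ≤ c :=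
    (neg_le_neg (algebraMap_mono A h)).trans hc.neg_algebraMap_norm_le_self
  calc algebraMap ℝ A η = 1 + -algebraMap ℝ A (1 - η) := by simp
    _ ≤ 1 + c := add_le_add_right hneg 1

lemma smul_mul_self_le_of_algebraMap_le_conjugate {p s b : A} (hp : IsSelfAdjoint p)
    (hps : p * s = 1) (hsp : s * p = 1) {η : ℝ} (h : algebraMap ℝ A η ≤ s * b * s) :
    η • (p * p) ≤ b := by
  have hconj := star_left_conjugate_le_conjugate h p
  rw [hp.star_eq] at hconj
  calc η • (p * p) = p * algebraMap ℝ A η * p := by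
        rw [Algebra.algebraMap_eq_smul_one, mul_smul_comm, mul_one, smul_mul_assoc]
    _ ≤ p * (s * b * s) * p := hconj
    _ = (p * s) * b * (s * p) := by noncomm_ring
    _ = b := by rw [hps, hsp, one_mul, mul_one]

lemma norm_le_one_div_sqrt_of_smul_star_mul_self_le_one {t : A} {η : ℝ} (hη : 0 < η)
    (h : η • (star t * t) ≤ 1) : ‖t‖ ≤ 1 / √η := by
  have hle : star t * t ≤ algebraMap ℝ A η⁻¹ := by
    rw [Algebra.algebraMap_eq_smul_one, ← inv_smul_smul₀ hη.ne' (star t * t)]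
    exact smul_le_smul_of_nonneg_left h (inv_nonneg.2 hη.le)
  have hsq : ‖t‖ ^ 2 ≤ η⁻¹ := by
    rw [sq, ← CStarRing.norm_star_mul_self]
    exact (CStarAlgebra.norm_le_iff_le_algebraMap _ (inv_nonneg.2 hη.le)).2 hle
  rw [one_div, ← Real.sqrt_inv]
  exact Real.le_sqrt_of_sq_le hsq

lemma add_pos_of_mem_spectrum (ha : 0 ≤ a) (hlam : 0 < lam) {x : ℝ} (hx : x ∈ spectrum ℝ a) :
    0 < x + lam :=
  add_pos_of_nonneg_of_pos (spectrum_nonneg_of_nonneg ha hx) hlam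

lemma continuousOn_rpow_neg_half_add (ha : 0 ≤ a) (hlam : 0 < lam) :
    ContinuousOn (fun x : ℝ => (x + lam) ^ (-(1/2 : ℝ))) (spectrum ℝ a) :=
  ContinuousOn.rpow_const (by fun_prop) fun _ hx => .inl (add_pos_of_mem_spectrum ha hlam hx).ne'

lemma cfc_sqrt_add_mul_cfc_rpow_neg_half_add (ha : 0 ≤ a) (hlam : 0 < lam) :
    cfc (fun x : ℝ => √(x + lam)) a * cfc (fun x : ℝ => (x + lam) ^ (-(1/2 : ℝ))) a = 1 := by
  rw [← cfc_mul _ _ a (by fun_prop) (continuousOn_rpow_neg_half_add ha hlam), ← cfc_one ℝ a]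
  refine cfc_congr fun x hx => ?_
  rw [Real.sqrt_eq_rpow, ← Real.rpow_add (add_pos_of_mem_spectrum ha hlam hx)]
  norm_num

lemma cfc_rpow_neg_half_add_mul_cfc_sqrt_add (ha : 0 ≤ a) (hlam : 0 < lam) :
    cfc (fun x : ℝ => (x + lam) ^ (-(1/2 : ℝ))) a * cfc (fun x : ℝ => √(x + lam)) a = 1 := by
  rw [← cfc_sqrt_add_mul_cfc_rpow_neg_half_add ha hlam]
  exact (cfc_commute_cfc _ _ a).eq

lemma cfc_sqrt_add_mul_self (ha : 0 ≤ a) (hlam : 0 < lam) :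
    cfc (fun x : ℝ => √(x + lam)) a * cfc (fun x : ℝ => √(x + lam)) a
      = a + algebraMap ℝ A lam := by
  rw [← cfc_mul _ _ a (by fun_prop) (by fun_prop),
    cfc_congr fun x hx => Real.mul_self_sqrt (add_pos_of_mem_spectrum ha hlam hx).le,
    cfc_add_const lam (fun x : ℝ => x) a, cfc_id' ℝ a]

lemma cfc_rpow_neg_half_add_conjugate (ha : 0 ≤ a) (hlam : 0 < lam) :
    cfc (fun x : ℝ => (x + lam) ^ (-(1/2 : ℝ))) a * (a + algebraMap ℝ A lam) *
      cfc (fun x : ℝ => (x + lam) ^ (-(1/2 : ℝ))) a = 1 := by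
  rw [← cfc_sqrt_add_mul_self ha hlam, ← mul_assoc, cfc_rpow_neg_half_add_mul_cfc_sqrt_add ha hlam,
    one_mul, cfc_sqrt_add_mul_cfc_rpow_neg_half_add ha hlam]

end CStarAlgebra

/-- If `A, B` are bounded positive self-adjoint operators on a Hilbert
space `H`, `λ > 0`, and `‖(A+λI)^{-1/2} (B−A) (A+λI)^{-1/2}‖ < 1 − η` for some `η > 0`,
then `‖(A+λI)^{1/2} (B+λI)^{-1/2}‖ ≤ 1/√η`.  The operator powers are expressed via the
continuous functional calculus. -/
theorem stmt_0 {H : Type*} [NormedAddCommGroup H] [InnerProductSpace ℂ H] [CompleteSpace H]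
    (A B : H →L[ℂ] H) (hA : 0 ≤ A) (hB : 0 ≤ B)
    (lam η : ℝ) (hlam : 0 < lam) (hη : 0 < η)
    (h : ‖cfc (fun x : ℝ => (x + lam) ^ (-(1/2 : ℝ))) A * (B - A) *
          cfc (fun x : ℝ => (x + lam) ^ (-(1/2 : ℝ))) A‖ < 1 - η) :
    ‖cfc (fun x : ℝ => Real.sqrt (x + lam)) A *
      cfc (fun x : ℝ => (x + lam) ^ (-(1/2 : ℝ))) B‖ ≤ 1 / Real.sqrt η := by
  set S := cfc (fun x : ℝ => (x + lam) ^ (-(1/2 : ℝ))) A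
  set P := cfc (fun x : ℝ => √(x + lam)) A
  set R := cfc (fun x : ℝ => (x + lam) ^ (-(1/2 : ℝ))) B
  have hSS : IsSelfAdjoint S := cfc_predicate _ A
  have hconj_B : algebraMap ℝ _ η ≤ S * (B + algebraMap ℝ _ lam) * S := by
    have hsplit : S * (B + algebraMap ℝ _ lam) * S = 1 + S * (B - A) * S := by
      rw [← cfc_rpow_neg_half_add_conjugate hA hlam]
      noncomm_ring
    rw [hsplit]
    exact ((IsSelfAdjoint.of_nonneg hB).sub (.of_nonneg hA)).conjugate_self hSS
      |>.algebraMap_le_one_add h.le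
  have hAB : η • (A + algebraMap ℝ _ lam) ≤ B + algebraMap ℝ _ lam := by
    rw [← cfc_sqrt_add_mul_self hA hlam]
    exact smul_mul_self_le_of_algebraMap_le_conjugate (cfc_predicate _ A)
      (cfc_sqrt_add_mul_cfc_rpow_neg_half_add hA hlam)
      (cfc_rpow_neg_half_add_mul_cfc_sqrt_add hA hlam) hconj_B
  refine norm_le_one_div_sqrt_of_smul_star_mul_self_le_one hη ?_
  have hRR : IsSelfAdjoint R := cfc_predicate _ B
  calc η • (star (P * R) * (P * R)) = R * (η • (A + algebraMap ℝ _ lam)) * R := by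
        rw [star_mul, (cfc_predicate _ A : IsSelfAdjoint P).star_eq, hRR.star_eq,
          ← cfc_sqrt_add_mul_self hA hlam, mul_smul_comm, smul_mul_assoc]
        noncomm_ring
    _ ≤ R * (B + algebraMap ℝ _ lam) * R := by
        simpa only [hRR.star_eq] using star_left_conjugate_le_conjugate hAB R
    _ = 1 := cfc_rpow_neg_half_add_conjugate hB hlam
end

section
/- Let A, B be bounded self-adjoint positive operators on a Hilbert space with max(‖A‖, ‖B‖) ≤ C. Then for any r ∈ [0,1], ‖A^r − B^r‖ ≤ ‖A−B‖^r. -/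
/-!
Since `a - b` is self-adjoint, `a ≤ b + ‖a - b‖`. Operator monotonicity of `x ↦ x ^ r` for
`r ∈ [0, 1]` (Löwner–Heinz) and the scalar subadditivity `(x + c) ^ r ≤ x ^ r + c ^ r`, applied
through the functional calculus of `b`, give `a ^ r ≤ b ^ r + ‖a - b‖ ^ r`. Exchanging `a` and `b`
bounds `a ^ r - b ^ r` between `∓‖a - b‖ ^ r`, which bounds its norm.
-/

open scoped NNReal

section CStarAlgebra

variable {A : Type*} [CStarAlgebra A] [PartialOrder A] [StarOrderedRing A]

lemma IsSelfAdjoint.norm_le_of_le_algebraMap {x : A} (hx : IsSelfAdjoint x) {c : ℝ}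
    (hc : 0 ≤ c) (h₁ : x ≤ algebraMap ℝ A c) (h₂ : -x ≤ algebraMap ℝ A c) : ‖x‖ ≤ c := by
  obtain _ | _ := subsingleton_or_nontrivial A
  · simpa [Subsingleton.elim x 0] using hc
  obtain hmem | hmem := CStarAlgebra.norm_or_neg_norm_mem_spectrum hx
  · exact (le_algebraMap_iff_spectrum_le hx).mp h₁ _ hmem
  · refine (le_algebraMap_iff_spectrum_le hx.neg).mp h₂ _ ?_
    rw [← spectrum.neg_eq, Set.mem_neg]
    simpa using hmem

namespace CFC

lemma add_algebraMap_rpow_le {b : A} (hb : 0 ≤ b) (c : ℝ≥0) {r : ℝ} (hr0 : 0 ≤ r)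
    (hr1 : r ≤ 1) : (b + algebraMap ℝ≥0 A c) ^ r ≤ b ^ r + algebraMap ℝ≥0 A (c ^ r) :=
  calc (b + algebraMap ℝ≥0 A c) ^ r = cfc (· + c) b ^ r := by
        rw [cfc_add_const c (fun x => x) b, cfc_id' ℝ≥0 b]
    _ = cfc (fun x : ℝ≥0 => (x + c) ^ r) b := by
        rw [rpow_def, ← cfc_comp' (· ^ r) (· + c) b]
    _ ≤ cfc (fun x : ℝ≥0 => x ^ r + c ^ r) b :=
        cfc_mono fun x _ => NNReal.rpow_add_le_add_rpow x c hr0 hr1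
    _ = b ^ r + algebraMap ℝ≥0 A (c ^ r) := by
        rw [cfc_add_const (c ^ r) (· ^ r) b, rpow_def]

lemma rpow_le_rpow_add_algebraMap_rpow {a b : A} (hb : 0 ≤ b) {c : ℝ≥0}
    (hab : a ≤ b + algebraMap ℝ≥0 A c) {r : ℝ} (hr0 : 0 ≤ r) (hr1 : r ≤ 1) :
    a ^ r ≤ b ^ r + algebraMap ℝ≥0 A (c ^ r) :=
  (rpow_le_rpow ⟨hr0, hr1⟩ hab).trans (add_algebraMap_rpow_le hb c hr0 hr1)

lemma rpow_sub_rpow_le_algebraMap {a b : A} (ha : 0 ≤ a) (hb : 0 ≤ b) {r : ℝ}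
    (hr0 : 0 ≤ r) (hr1 : r ≤ 1) : a ^ r - b ^ r ≤ algebraMap ℝ A (‖a - b‖ ^ r) := by
  have hab : a ≤ b + algebraMap ℝ≥0 A ‖a - b‖₊ :=
    calc a = b + (a - b) := by abel
      _ ≤ b + algebraMap ℝ A ‖a - b‖ := by
        gcongr
        exact ((IsSelfAdjoint.of_nonneg ha).sub (.of_nonneg hb)).le_algebraMap_norm_self
      _ = b + algebraMap ℝ≥0 A ‖a - b‖₊ := by
        rw [IsScalarTower.algebraMap_apply ℝ≥0 ℝ A]
        rfl
  rw [sub_le_iff_le_add']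
  convert rpow_le_rpow_add_algebraMap_rpow hb hab hr0 hr1 using 2
  rw [IsScalarTower.algebraMap_apply ℝ≥0 ℝ A]
  rfl

theorem norm_rpow_sub_rpow_le {a b : A} (ha : 0 ≤ a) (hb : 0 ≤ b) {r : ℝ}
    (hr0 : 0 ≤ r) (hr1 : r ≤ 1) : ‖a ^ r - b ^ r‖ ≤ ‖a - b‖ ^ r := by
  have hsa : IsSelfAdjoint (a ^ r - b ^ r) :=
    (IsSelfAdjoint.of_nonneg rpow_nonneg).sub (.of_nonneg rpow_nonneg)
  refine hsa.norm_le_of_le_algebraMap (by positivity)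
    (rpow_sub_rpow_le_algebraMap ha hb hr0 hr1) ?_
  rw [neg_sub, norm_sub_rev]
  exact rpow_sub_rpow_le_algebraMap hb ha hr0 hr1

end CFC

end CStarAlgebra

theorem stmt_2_general {H : Type*} [NormedAddCommGroup H] [InnerProductSpace ℂ H] [CompleteSpace H]
    (A B : H →L[ℂ] H) (hA : 0 ≤ A) (hB : 0 ≤ B) (r : ℝ) (hr0 : 0 ≤ r) (hr1 : r ≤ 1) :
    ‖cfc (fun x : ℝ => x ^ r) A - cfc (fun x : ℝ => x ^ r) B‖ ≤ ‖A - B‖ ^ r := by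
  rw [← CFC.rpow_eq_cfc_real hA, ← CFC.rpow_eq_cfc_real hB]
  exact CFC.norm_rpow_sub_rpow_le hA hB hr0 hr1

/-- For bounded positive self-adjoint operators `A, B` with
`max(‖A‖,‖B‖) ≤ C` and `r ∈ [0,1]`, one has `‖A^r − B^r‖ ≤ ‖A − B‖^r`
(operator powers via continuous functional calculus). -/
theorem stmt_2 {H : Type*} [NormedAddCommGroup H] [InnerProductSpace ℂ H] [CompleteSpace H]
    (A B : H →L[ℂ] H) (hA : 0 ≤ A) (hB : 0 ≤ B) (C : ℝ)
    (hAC : ‖A‖ ≤ C) (hBC : ‖B‖ ≤ C) (r : ℝ) (hr0 : 0 ≤ r) (hr1 : r ≤ 1) :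
    ‖cfc (fun x : ℝ => x ^ r) A - cfc (fun x : ℝ => x ^ r) B‖ ≤ ‖A - B‖ ^ r :=
  stmt_2_general A B hA hB r hr0 hr1
end

section
/- Let A, B be bounded self-adjoint positive operators on a Hilbert space. Then for any s ∈ [0,1], ‖A^s B^s‖ ≤ ‖AB‖^s. -/
/-!
With `m = (u + v) / 2`, the C⋆-identity and `r(xy) = r(yx)` for the spectral radius give
`‖a^m b^m‖² = r(b^m a^(u+v) b^m) = r((a^v b^v)(b^u a^u)) ≤ ‖a^u b^u‖ ‖a^v b^v‖`,
so `f t = ‖a^t b^t‖` is midpoint log-convex, with `f 0 ≤ 1` and `f 1 = ‖a b‖`.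
Iterating along binary expansions gives `f t ^ 2^n ≤ ‖a b‖^⌊2^n t⌋ · M` for a bound `M` of `f`
on `[0, 1]`; taking `2^n`-th roots and letting `n → ∞` yields `f t ≤ ‖a b‖^t`. Boundedness
replaces continuity here: `t ↦ a^t` jumps at `t = 0` when `a` is not invertible.
-/
open scoped NNReal ENNReal
open Set Filter Topology

section MidpointLogConvex

variable {f : ℝ → ℝ} {c : ℝ}

theorem pow_two_pow_le_of_sq_midpoint_le_mul (hf : ∀ t ∈ Icc (0 : ℝ) 1, 0 ≤ f t)
    (h0 : f 0 ≤ 1) (h1 : f 1 ≤ c) {M : ℝ} (hM : ∀ t ∈ Icc (0 : ℝ) 1, f t ≤ M) (hM1 : 1 ≤ M)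
    (hmid : ∀ u ∈ Icc (0 : ℝ) 1, ∀ v ∈ Icc (0 : ℝ) 1, f ((u + v) / 2) ^ 2 ≤ f u * f v)
    (n : ℕ) {t : ℝ} (ht : t ∈ Icc (0 : ℝ) 1) :
    f t ^ 2 ^ n ≤ c ^ ⌊t * 2 ^ n⌋₊ * M := by
  have hc : 0 ≤ c := (hf 1 ⟨zero_le_one, le_rfl⟩).trans h1
  induction n generalizing t with
  | zero =>
    rcases ht.2.lt_or_eq with ht1 | rfl
    · simpa [Nat.floor_eq_zero.mpr ht1] using hM t ht
    · simpa using h1.trans (le_mul_of_one_le_right hc hM1)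
  | succ n ih =>
    rw [pow_succ', pow_mul]
    rcases le_or_gt t (1 / 2) with hle | hgt
    · have h2t : 2 * t ∈ Icc (0 : ℝ) 1 := ⟨by linarith [ht.1], by linarith⟩
      have hsq : f t ^ 2 ≤ f (2 * t) := by
        have hmid0 := hmid 0 ⟨le_rfl, zero_le_one⟩ (2 * t) h2t
        rw [zero_add, mul_div_cancel_left₀ t two_ne_zero] at hmid0
        exact hmid0.trans (mul_le_of_le_one_left (hf _ h2t) h0)
      calc (f t ^ 2) ^ 2 ^ n ≤ f (2 * t) ^ 2 ^ n := by gcongr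
        _ ≤ c ^ ⌊2 * t * 2 ^ n⌋₊ * M := ih h2t
        _ = c ^ ⌊t * 2 ^ (n + 1)⌋₊ * M := by ring_nf
    · have h2t : 2 * t - 1 ∈ Icc (0 : ℝ) 1 := ⟨by linarith, by linarith [ht.2]⟩
      have hsq : f t ^ 2 ≤ c * f (2 * t - 1) := by
        have hmid1 := hmid 1 ⟨zero_le_one, le_rfl⟩ (2 * t - 1) h2t
        rw [show (1 + (2 * t - 1)) / 2 = t by ring] at hmid1
        exact hmid1.trans (mul_le_mul_of_nonneg_right h1 (hf _ h2t))
      have hfloor : ⌊t * 2 ^ (n + 1)⌋₊ = 2 ^ n + ⌊(2 * t - 1) * 2 ^ n⌋₊ := by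
        have hsplit : t * (2 : ℝ) ^ (n + 1) = (2 * t - 1) * 2 ^ n + ((2 ^ n : ℕ) : ℝ) := by
          push_cast; ring
        rw [hsplit, Nat.floor_add_natCast (mul_nonneg h2t.1 (by positivity)), add_comm]
      calc (f t ^ 2) ^ 2 ^ n ≤ (c * f (2 * t - 1)) ^ 2 ^ n := by gcongr
        _ = c ^ 2 ^ n * f (2 * t - 1) ^ 2 ^ n := mul_pow _ _ _
        _ ≤ c ^ 2 ^ n * (c ^ ⌊(2 * t - 1) * 2 ^ n⌋₊ * M) := by gcongr; exact ih h2t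
        _ = c ^ ⌊t * 2 ^ (n + 1)⌋₊ * M := by rw [hfloor, pow_add, mul_assoc]

theorem le_rpow_of_sq_midpoint_le_mul (hf : ∀ t ∈ Icc (0 : ℝ) 1, 0 ≤ f t)
    (h0 : f 0 ≤ 1) (h1 : f 1 ≤ c) (hbdd : BddAbove (f '' Icc 0 1))
    (hmid : ∀ u ∈ Icc (0 : ℝ) 1, ∀ v ∈ Icc (0 : ℝ) 1, f ((u + v) / 2) ^ 2 ≤ f u * f v)
    {t : ℝ} (ht : t ∈ Icc (0 : ℝ) 1) :
    f t ≤ c ^ t := by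
  rcases ht.1.eq_or_lt with rfl | htpos
  · simpa using h0
  have hc : 0 ≤ c := (hf 1 ⟨zero_le_one, le_rfl⟩).trans h1
  obtain ⟨M, hM⟩ := hbdd
  have hM' : ∀ s ∈ Icc (0 : ℝ) 1, f s ≤ max M 1 := fun s hs =>
    (hM (mem_image_of_mem f hs)).trans (le_max_left _ _)
  have hbound : ∀ n : ℕ,
      f t ≤ c ^ ((⌊t * 2 ^ n⌋₊ : ℝ) / 2 ^ n) * max M 1 ^ ((2 : ℝ) ^ n)⁻¹ := by
    intro n
    calc f t = (f t ^ 2 ^ n) ^ (((2 ^ n : ℕ) : ℝ)⁻¹) :=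
          (Real.pow_rpow_inv_natCast (hf t ht) (by positivity)).symm
      _ ≤ (c ^ ⌊t * 2 ^ n⌋₊ * max M 1) ^ (((2 ^ n : ℕ) : ℝ)⁻¹) := by
          gcongr
          · exact pow_nonneg (hf t ht) _
          · exact pow_two_pow_le_of_sq_midpoint_le_mul hf h0 h1 hM' (le_max_right _ _) hmid n ht
      _ = c ^ ((⌊t * 2 ^ n⌋₊ : ℝ) / 2 ^ n) * max M 1 ^ ((2 : ℝ) ^ n)⁻¹ := by
          rw [Real.mul_rpow (by positivity) (by positivity), ← Real.rpow_natCast c,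
            ← Real.rpow_mul hc]
          push_cast
          rfl
  have h2n : Tendsto (fun n : ℕ => (2 : ℝ) ^ n) atTop atTop :=
    tendsto_pow_atTop_atTop_of_one_lt one_lt_two
  have hlim : Tendsto (fun n : ℕ => c ^ ((⌊t * 2 ^ n⌋₊ : ℝ) / 2 ^ n) * max M 1 ^ ((2 : ℝ) ^ n)⁻¹)
      atTop (𝓝 (c ^ t * max M 1 ^ (0 : ℝ))) :=
    ((Real.continuousAt_const_rpow' htpos.ne').tendsto.comp
      ((tendsto_nat_floor_mul_div_atTop ht.1).comp h2n)).mul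
    ((Real.continuousAt_const_rpow (by positivity : max M 1 ≠ 0)).tendsto.comp
      (tendsto_inv_atTop_zero.comp h2n))
  rw [Real.rpow_zero, mul_one] at hlim
  exact ge_of_tendsto' hlim hbound

end MidpointLogConvex

theorem spectralRadius_mul_comm {𝕜 R : Type*} [NormedField 𝕜] [Ring R] [Algebra 𝕜 R]
    (a b : R) : spectralRadius 𝕜 (a * b) = spectralRadius 𝕜 (b * a) := by
  suffices h : ∀ x y : R, spectralRadius 𝕜 (x * y) ≤ spectralRadius 𝕜 (y * x) from
    (h a b).antisymm (h b a)
  intro x y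
  refine iSup₂_le fun k hk => ?_
  rcases eq_or_ne k 0 with rfl | hk0
  · simp
  · have hk' : k ∈ spectrum 𝕜 (y * x) \ {0} :=
      spectrum.nonzero_mul_comm (𝕜 := 𝕜) x y ▸ ⟨hk, hk0⟩
    exact le_iSup₂ (f := fun k (_ : k ∈ spectrum 𝕜 (y * x)) => (‖k‖₊ : ℝ≥0∞)) k hk'.1

theorem CFC.rpow_mul_rpow_of_nonneg {A : Type*} [PartialOrder A] [Ring A] [StarRing A]
    [TopologicalSpace A] [StarOrderedRing A] [Algebra ℝ A]
    [ContinuousFunctionalCalculus ℝ A IsSelfAdjoint] [NonnegSpectrumClass ℝ A]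
    {a : A} {x y : ℝ} (hx : 0 ≤ x) (hy : 0 ≤ y) :
    a ^ x * a ^ y = a ^ (x + y) := by
  simp only [CFC.rpow_def]
  rw [← cfc_mul _ _ a (NNReal.continuous_rpow_const hx).continuousOn
    (NNReal.continuous_rpow_const hy).continuousOn]
  exact cfc_congr fun z _ => (NNReal.rpow_add_of_nonneg z hx hy).symm

section CStarAlgebra

variable {A : Type*} [CStarAlgebra A] [PartialOrder A] [StarOrderedRing A]

theorem norm_rpow_le_max_one [Nontrivial A] {a : A} (ha : 0 ≤ a) {t : ℝ} (ht0 : 0 ≤ t)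
    (ht1 : t ≤ 1) :
    ‖a ^ t‖ ≤ max 1 ‖a‖ := by
  rcases ht0.eq_or_lt with rfl | htpos
  · simp [CFC.rpow_zero a ha]
  · rw [CFC.norm_rpow a htpos ha]
    calc ‖a‖ ^ t ≤ max 1 ‖a‖ ^ t := by gcongr; exact le_max_right _ _
      _ ≤ max 1 ‖a‖ := Real.rpow_le_self_of_one_le (le_max_left _ _) ht1

theorem sq_norm_rpow_mul_rpow_midpoint_le [Nontrivial A] (a b : A) {u v : ℝ} (hu : 0 ≤ u)
    (hv : 0 ≤ v) :
    ‖a ^ ((u + v) / 2) * b ^ ((u + v) / 2)‖ ^ 2 ≤ ‖a ^ u * b ^ u‖ * ‖a ^ v * b ^ v‖ := by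
  set m := (u + v) / 2
  have hm : 0 ≤ m := by positivity
  have hmm : m + m = u + v := by ring
  set x := a ^ m * b ^ m
  have hstar : star x * x = b ^ m * (a ^ (u + v) * b ^ m) := by
    rw [star_mul, CFC.rpow_nonneg.isSelfAdjoint.star_eq, CFC.rpow_nonneg.isSelfAdjoint.star_eq,
      mul_assoc, ← mul_assoc (a ^ m), CFC.rpow_mul_rpow_of_nonneg hm hm, hmm]
  have hcyclic : spectralRadius ℂ (star x * x)
      = spectralRadius ℂ ((a ^ v * b ^ v) * (b ^ u * a ^ u)) := by
    calc spectralRadius ℂ (star x * x) = spectralRadius ℂ (a ^ (u + v) * b ^ m * b ^ m) := by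
          rw [hstar, spectralRadius_mul_comm]
      _ = spectralRadius ℂ (a ^ u * (a ^ v * b ^ v * b ^ u)) := by
          rw [mul_assoc, CFC.rpow_mul_rpow_of_nonneg hm hm, hmm,
            ← CFC.rpow_mul_rpow_of_nonneg (a := a) hu hv, add_comm u v,
            ← CFC.rpow_mul_rpow_of_nonneg (a := b) hv hu]
          simp only [mul_assoc]
      _ = spectralRadius ℂ ((a ^ v * b ^ v) * (b ^ u * a ^ u)) := by
          rw [spectralRadius_mul_comm]
          simp only [mul_assoc]
  have hswap : ‖b ^ u * a ^ u‖ = ‖a ^ u * b ^ u‖ := by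
    rw [← norm_star, star_mul, CFC.rpow_nonneg.isSelfAdjoint.star_eq,
      CFC.rpow_nonneg.isSelfAdjoint.star_eq]
  have hnn : ‖x‖₊ * ‖x‖₊ ≤ ‖a ^ v * b ^ v‖₊ * ‖b ^ u * a ^ u‖₊ := by
    rw [← CStarRing.nnnorm_star_mul_self, ← ENNReal.coe_le_coe,
      ← (IsSelfAdjoint.star_mul_self x).spectralRadius_eq_nnnorm, hcyclic]
    exact (spectrum.spectralRadius_le_nnnorm _).trans (by exact_mod_cast nnnorm_mul_le _ _)
  rw [sq, ← hswap, mul_comm ‖b ^ u * _‖]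
  exact_mod_cast hnn

theorem norm_rpow_mul_rpow_le {a b : A} (ha : 0 ≤ a) (hb : 0 ≤ b) {s : ℝ} (hs0 : 0 ≤ s)
    (hs1 : s ≤ 1) :
    ‖a ^ s * b ^ s‖ ≤ ‖a * b‖ ^ s := by
  rcases subsingleton_or_nontrivial A with hA | hA
  · rw [Subsingleton.elim (a ^ s * b ^ s) 0, norm_zero]
    positivity
  refine le_rpow_of_sq_midpoint_le_mul (f := fun t => ‖a ^ t * b ^ t‖)
    (fun _ _ => norm_nonneg _) ?_ ?_ ?_ ?_ ⟨hs0, hs1⟩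
  · simp [CFC.rpow_zero a ha, CFC.rpow_zero b hb]
  · simp [CFC.rpow_one a ha, CFC.rpow_one b hb]
  · refine ⟨max 1 ‖a‖ * max 1 ‖b‖, ?_⟩
    rintro _ ⟨t, ht, rfl⟩
    exact (norm_mul_le _ _).trans (mul_le_mul (norm_rpow_le_max_one ha ht.1 ht.2)
      (norm_rpow_le_max_one hb ht.1 ht.2) (norm_nonneg _) (by positivity))
  · intro u hu v hv
    exact sq_norm_rpow_mul_rpow_midpoint_le a b hu.1 hv.1

end CStarAlgebra

/-- For bounded positive self-adjoint operators `A, B` on a Hilbert space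
and `s ∈ [0,1]`, `‖A^s B^s‖ ≤ ‖A B‖^s` (Löwner–Heinz / Bhatia IX.2.1-2). -/
theorem stmt_4 {H : Type*} [NormedAddCommGroup H] [InnerProductSpace ℂ H] [CompleteSpace H]
    (A B : H →L[ℂ] H) (hA : 0 ≤ A) (hB : 0 ≤ B)
    (s : ℝ) (hs0 : 0 ≤ s) (hs1 : s ≤ 1) :
    ‖cfc (fun x : ℝ => x ^ s) A * cfc (fun x : ℝ => x ^ s) B‖ ≤ ‖A * B‖ ^ s := by
  rw [← CFC.rpow_eq_cfc_real hA, ← CFC.rpow_eq_cfc_real hB]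
  exact norm_rpow_mul_rpow_le hA hB hs0 hs1
end

section
/- Let p be a real polynomial of degree m ≥ 1 with p(0) = 1 whose roots are all real, distinct, and lie in (0, κ]. Let x₁ denote its smallest root. Then the polynomial q(x) := (1 − p(x))/x satisfies 0 ≤ q(x) ≤ |p'(0)| for all x ∈ [0, x₁], and 0 ≤ x q(x) = 1 − p(x) ≤ 1 on [0, x₁]. -/
open Polynomial

lemma aux_prod {ι : Type*} (s : Finset ι) (u : ι → ℝ)
    (h0 : ∀ i ∈ s, 0 ≤ u i) (h1 : ∀ i ∈ s, u i ≤ 1) :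
    0 ≤ ∏ i ∈ s, (1 - u i) ∧ (∏ i ∈ s, (1 - u i)) ≤ 1 ∧
      1 - ∑ i ∈ s, u i ≤ ∏ i ∈ s, (1 - u i) := by
  induction s using Finset.cons_induction with
  | empty => simp
  | cons a s ha ih =>
    obtain ⟨ih0, ih1, ih2⟩ := ih (fun i hi => h0 i (Finset.mem_cons_of_mem hi))
      (fun i hi => h1 i (Finset.mem_cons_of_mem hi))
    have ha0 : 0 ≤ u a := h0 a (Finset.mem_cons_self _ _)
    have ha1 : u a ≤ 1 := h1 a (Finset.mem_cons_self _ _)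
    rw [Finset.prod_cons, Finset.sum_cons]
    refine ⟨mul_nonneg (by linarith) ih0, ?_, ?_⟩
    · calc (1 - u a) * ∏ i ∈ s, (1 - u i) ≤ 1 * 1 := by
            apply mul_le_mul (by linarith) ih1 ih0 zero_le_one
        _ = 1 := one_mul 1
    · nlinarith [mul_nonneg ha0 ih0, mul_le_one₀ ha1 ih0 ih1]

lemma aux_deriv {ι : Type*} (s : Finset ι) (a : ι → ℝ) :
    (Polynomial.derivative (∏ i ∈ s, (1 - Polynomial.C (a i) * Polynomial.X))).eval 0
      = -∑ i ∈ s, a i := by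
  induction s using Finset.cons_induction with
  | empty => simp
  | cons b s hb ih =>
    rw [Finset.prod_cons, Finset.sum_cons, derivative_mul, eval_add, eval_mul, eval_mul,
      eval_prod]
    simp only [derivative_sub, derivative_one, derivative_mul, derivative_C, derivative_X,
      zero_sub, zero_mul, mul_one, zero_add, eval_neg, eval_C, eval_sub, eval_one, eval_mul,
      eval_X, mul_zero, sub_zero, one_mul] at *
    rw [ih]
    simp
    ring

/-- Let `p` be a real polynomial of degree `m ≥ 1` with `p(0)=1` whose roots
`x₀ < … < x_{m-1}` are real, distinct, and lie in `(0, κ]` (so that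
`p = ∏ (1 - x/xᵢ)`).  Let `q` be the polynomial with `p(x) = 1 − x q(x)`.  Then on
`[0, x₀]` one has `0 ≤ q(x) ≤ |p'(0)|` and `0 ≤ x q(x) = 1 − p(x) ≤ 1`. -/
theorem stmt_5 (m : ℕ) (hm : 0 < m) (κ : ℝ) (x : Fin m → ℝ)
    (hmono : StrictMono x) (hx : ∀ i, x i ∈ Set.Ioc 0 κ)
    (p q : Polynomial ℝ)
    (hp : p = ∏ i : Fin m, (1 - Polynomial.C (x i)⁻¹ * Polynomial.X))
    (hq : p = 1 - Polynomial.X * q) :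
    ∀ t ∈ Set.Icc (0 : ℝ) (x ⟨0, hm⟩),
      0 ≤ q.eval t ∧ q.eval t ≤ |(Polynomial.derivative p).eval 0| ∧
        0 ≤ t * q.eval t ∧ t * q.eval t = 1 - p.eval t ∧ t * q.eval t ≤ 1 := by
  intro t ht
  obtain ⟨ht0, ht1⟩ := ht
  set S : ℝ := ∑ i, (x i)⁻¹ with hSdef
  have hxpos : ∀ i, 0 < x i := fun i => (hx i).1
  have hS0 : 0 ≤ S := Finset.sum_nonneg fun i _ => (inv_nonneg).mpr (hxpos i).le
  -- derivative at 0
  have hd : (Polynomial.derivative p).eval 0 = -S := by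
    rw [hp]; exact aux_deriv _ _
  have habs : |(Polynomial.derivative p).eval 0| = S := by
    rw [hd, abs_neg, abs_of_nonneg hS0]
  -- eval relation
  have heval : p.eval t = 1 - t * q.eval t := by
    rw [hq]; simp
  -- product bounds
  have hu0 : ∀ i ∈ (Finset.univ : Finset (Fin m)), 0 ≤ (x i)⁻¹ * t :=
    fun i _ => mul_nonneg (inv_nonneg.mpr (hxpos i).le) ht0
  have hu1 : ∀ i ∈ (Finset.univ : Finset (Fin m)), (x i)⁻¹ * t ≤ 1 := by
    intro i _
    have hle : t ≤ x i := le_trans ht1 (hmono.monotone (Fin.mk_le_of_le_val (Nat.zero_le _)))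
    rw [inv_mul_le_iff₀ (hxpos i)]
    simpa using hle
  obtain ⟨hP0, hP1, hP2⟩ := aux_prod Finset.univ (fun i => (x i)⁻¹ * t) hu0 hu1
  have hpt : p.eval t = ∏ i, (1 - (x i)⁻¹ * t) := by
    rw [hp, eval_prod]; simp
  have hsum : ∑ i, (x i)⁻¹ * t = t * S := by
    rw [← Finset.sum_mul]; ring
  rw [← hpt] at hP0 hP1
  rw [← hpt, hsum] at hP2
  -- t * q t = 1 - p t
  have hkey : t * q.eval t = 1 - p.eval t := by linarith [heval]
  -- q bounds
  have htS : t * q.eval t ≤ t * S := by rw [hkey]; linarith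
  have hq0le : 0 ≤ t * q.eval t := by rw [hkey]; linarith
  rcases eq_or_lt_of_le ht0 with h | h
  · -- t = 0
    have hq0 : q.eval 0 = S := by
      have := congrArg (fun r => (Polynomial.derivative r).eval 0) hq
      simp only [derivative_sub, derivative_one, derivative_mul, derivative_X, eval_sub,
        eval_add, eval_mul, eval_X, eval_zero, zero_sub, zero_mul, zero_add, eval_neg,
        one_mul, eval_one, mul_zero] at this
      rw [hd] at this
      linarith
    subst h
    rw [habs, hq0]
    refine ⟨hS0, le_refl _, by simp, by simpa using hkey, by simp⟩
  · refine ⟨nonneg_of_mul_nonneg_right hq0le h, ?_, hq0le, hkey, by linarith⟩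
    rw [habs]
    exact le_of_mul_le_mul_left htS h
end

section
/- Let p be a real polynomial of degree m ≥ 1 with p(0) = 1 and all roots real, distinct, lying in (0, κ], with smallest root x₁. Define φ(x) = p(x)·(x₁/(x₁−x))^{1/2} on [0, x₁). Then for every ν ≥ 0, sup_{x ∈ [0, x₁)} x^ν φ(x)² ≤ ν^ν |p'(0)|^{-ν} (with the convention 0⁰ = 1). -/
/-!
Writing `aᵢ = t / xᵢ ∈ [0, 1]`, the smallest root contributes `(1 - a₀)² · x₀/(x₀ - t) = 1 - a₀`
to `φ(t)²` and every other root contributes `(1 - aᵢ)² ≤ 1 - aᵢ`; since `1 - a ≤ e^{-a}`, this gives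
`φ(t)² ≤ e^{-t S}` with `S = ∑ 1/xᵢ = |p'(0)|`. Finally `u^ν ≤ ν^ν e^u` for `u = t S`, because
`u/ν ≤ e^{u/ν}`.
-/

open Polynomial Finset

namespace Real

theorem rpow_le_rpow_mul_exp {u ν : ℝ} (hu : 0 ≤ u) (hν : 0 ≤ ν) : u ^ ν ≤ ν ^ ν * exp u := by
  rcases hν.eq_or_lt with rfl | hν
  · simpa using one_le_exp hu
  calc u ^ ν = (u / ν) ^ ν * ν ^ ν := by
        rw [div_rpow hu hν.le, div_mul_cancel₀ _ (rpow_pos_of_pos hν ν).ne']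
    _ ≤ exp (u / ν) ^ ν * ν ^ ν := by
        gcongr
        linarith [add_one_le_exp (u / ν)]
    _ = ν ^ ν * exp u := by rw [← exp_mul, div_mul_cancel₀ _ hν.ne', mul_comm]

theorem rpow_mul_exp_neg_mul_le {t ν S : ℝ} (ht : 0 ≤ t) (hν : 0 ≤ ν) (hS : 0 < S) :
    t ^ ν * exp (-(S * t)) ≤ ν ^ ν * S ^ (-ν) := by
  have hSt : t ^ ν = (S * t) ^ ν * S ^ (-ν) := by
    rw [mul_rpow hS.le ht, rpow_neg hS.le, mul_comm (S ^ ν), mul_assoc,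
      mul_inv_cancel₀ (rpow_pos_of_pos hS ν).ne', mul_one]
  calc t ^ ν * exp (-(S * t)) = (S * t) ^ ν * exp (-(S * t)) * S ^ (-ν) := by rw [hSt]; ring
    _ ≤ ν ^ ν * exp (S * t) * exp (-(S * t)) * S ^ (-ν) := by
        gcongr
        exact rpow_le_rpow_mul_exp (by positivity) hν
    _ = ν ^ ν * S ^ (-ν) := by rw [mul_assoc (ν ^ ν), ← exp_add, add_neg_cancel, exp_zero]; ring

theorem sq_one_sub_le_exp_neg {a : ℝ} (ha₀ : 0 ≤ a) (ha₁ : a ≤ 1) : (1 - a) ^ 2 ≤ exp (-a) := by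
  nlinarith [add_one_le_exp (-a)]

theorem prod_one_sub_sq_div_le_exp_neg_sum {ι : Type*} [DecidableEq ι] {s : Finset ι}
    {a : ι → ℝ} (ha₀ : ∀ i ∈ s, 0 ≤ a i) (ha₁ : ∀ i ∈ s, a i ≤ 1) {j : ι} (hj : j ∈ s)
    (haj : a j < 1) :
    (∏ i ∈ s, (1 - a i)) ^ 2 / (1 - a j) ≤ exp (-∑ i ∈ s, a i) := by
  have hj₀ : 0 < 1 - a j := sub_pos.2 haj
  rw [← mul_prod_erase s _ hj, ← add_sum_erase s _ hj, neg_add, exp_add,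
    show ((1 - a j) * ∏ i ∈ s.erase j, (1 - a i)) ^ 2 / (1 - a j)
      = (1 - a j) * ∏ i ∈ s.erase j, (1 - a i) ^ 2 by rw [prod_pow]; field_simp,
    ← sum_neg_distrib, exp_sum]
  gcongr with i hi
  · linarith [add_one_le_exp (-a j)]
  · exact sq_one_sub_le_exp_neg (ha₀ i (mem_of_mem_erase hi)) (ha₁ i (mem_of_mem_erase hi))

end Real

theorem Polynomial.eval_zero_derivative_prod_one_sub_C_mul_X {R ι : Type*} [CommRing R]
    [DecidableEq ι] (s : Finset ι) (a : ι → R) :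
    (derivative (∏ i ∈ s, (1 - C (a i) * X))).eval 0 = -∑ i ∈ s, a i := by
  induction s using Finset.induction_on with
  | empty => simp
  | insert j s hj ih =>
    rw [prod_insert hj, derivative_mul, eval_add, eval_mul, eval_mul, ih, sum_insert hj]
    simp only [derivative_sub, derivative_one, derivative_C_mul_X, eval_sub, eval_mul, eval_prod,
      eval_neg, eval_one, eval_C, eval_X, mul_zero, sub_zero, prod_const_one, zero_sub]
    ring

/-- Let `p` be a real polynomial of degree `m ≥ 1` with `p(0)=1` and
distinct real roots `0 < x₀ < … < x_{m-1} ≤ κ`.  With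
`φ(t) = p(t)·√(x₀/(x₀−t))` on `[0, x₀)`, for every `ν ≥ 0` and `t ∈ [0, x₀)` one has
`t^ν φ(t)² ≤ ν^ν |p'(0)|^{−ν}` (real powers, with the convention `0⁰ = 1`). -/
theorem stmt_8 (m : ℕ) (hm : 0 < m) (κ : ℝ) (x : Fin m → ℝ)
    (hmono : StrictMono x) (hx : ∀ i, x i ∈ Set.Ioc 0 κ)
    (p : Polynomial ℝ)
    (hp : p = ∏ i : Fin m, (1 - Polynomial.C (x i)⁻¹ * Polynomial.X))
    (φ : ℝ → ℝ)
    (hφ : ∀ t, φ t = p.eval t * Real.sqrt (x ⟨0, hm⟩ / (x ⟨0, hm⟩ - t))) :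
    ∀ ν : ℝ, 0 ≤ ν → ∀ t ∈ Set.Ico (0 : ℝ) (x ⟨0, hm⟩),
      t ^ ν * (φ t) ^ 2 ≤ ν ^ ν * |(Polynomial.derivative p).eval 0| ^ (-ν) := by
  intro ν hν t ⟨ht₀, ht⟩
  set x₀ := x ⟨0, hm⟩
  have hxpos i : 0 < x i := (hx i).1
  have hx₀ : 0 < x₀ := hxpos _
  have ha₀ i : 0 ≤ (x i)⁻¹ * t := mul_nonneg (inv_nonneg.2 (hxpos i).le) ht₀
  have ha₁ i : (x i)⁻¹ * t ≤ 1 := by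
    have hx₀_le : x₀ ≤ x i := hmono.monotone (Fin.mk_le_mk.2 (Nat.zero_le _))
    rw [inv_mul_le_one₀ (hxpos i)]
    exact ht.le.trans hx₀_le
  set S := ∑ i, (x i)⁻¹
  have hS : 0 < S := sum_pos (fun i _ ↦ inv_pos.2 (hxpos i)) ⟨⟨0, hm⟩, mem_univ _⟩
  have hderiv : |(derivative p).eval 0| = S := by
    rw [hp, eval_zero_derivative_prod_one_sub_C_mul_X, abs_neg, abs_of_pos hS]
  have hφ_sq : φ t ^ 2 ≤ Real.exp (-(S * t)) := by
    have hφ_eq : φ t ^ 2 = (∏ i, (1 - (x i)⁻¹ * t)) ^ 2 / (1 - x₀⁻¹ * t) := by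
      rw [hφ, mul_pow, Real.sq_sqrt (div_nonneg hx₀.le (sub_pos.2 ht).le), hp]
      simp only [eval_prod, eval_sub, eval_one, eval_mul, eval_C, eval_X]
      field_simp
    rw [hφ_eq, sum_mul]
    exact Real.prod_one_sub_sq_div_le_exp_neg_sum (fun i _ ↦ ha₀ i) (fun i _ ↦ ha₁ i) (mem_univ _)
      (by rwa [inv_mul_lt_one₀ hx₀])
  rw [hderiv]
  calc t ^ ν * φ t ^ 2 ≤ t ^ ν * Real.exp (-(S * t)) := by gcongr
    _ ≤ ν ^ ν * S ^ (-ν) := Real.rpow_mul_exp_neg_mul_le ht₀ hν hS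
end

section
/- Let S be a bounded nonnegative self-adjoint operator on a Hilbert space H, and λ, ε > 0. For any f ∈ H lying in the spectral subspace of S corresponding to [ε, ∞) (i.e. F_ε^⊥ f = f, where F_ε projects onto the part of the spectrum below ε), one has ‖(S+λI)^{1/2} f‖ ≤ (1 + √(λ/ε)) · √(1 + λ/ε) · ‖(S+λI)^{-1/2} S f‖. -/
/-!
On the spectral subspace of `[ε, ∞)`, `cfc g S f` only depends on `g` through its values on
`[ε, ∞)`, so both sides may be computed with functions clipped at `ε`, i.e. precomposed with
`max · ε`. The clipped functions `√(y + λ)` and `y / √(y + λ)` (with `y = max x ε ≥ ε`) satisfy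
`√(y + λ) ≤ C y / √(y + λ)` because `y + λ ≤ (1 + λ/ε) y ≤ C y`, and an inequality `|g| ≤ C |h|`
on the spectrum lifts to `(cfc g S)² ≤ C² (cfc h S)²` in the Loewner order, hence to norms.
-/

theorem one_add_le_one_add_sqrt_mul_sqrt_one_add {t : ℝ} (ht : 0 ≤ t) :
    1 + t ≤ (1 + √t) * √(1 + t) := by
  have h1 : √(1 + t) ^ 2 = 1 + t := Real.sq_sqrt (by positivity)
  nlinarith [Real.sqrt_nonneg t, Real.sqrt_nonneg (1 + t), Real.sq_sqrt ht]

theorem add_le_one_add_div_mul {ε lam y : ℝ} (hε : 0 < ε) (hlam : 0 ≤ lam) (hy : ε ≤ y) :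
    y + lam ≤ (1 + lam / ε) * y := by
  have : lam ≤ lam / ε * y := by
    rw [div_mul_eq_mul_div, le_div_iff₀ hε]
    exact mul_le_mul_of_nonneg_left hy hlam
  linarith

theorem sqrt_add_le_mul_rpow_mul {ε lam y : ℝ} (hε : 0 < ε) (hlam : 0 ≤ lam) (hy : ε ≤ y) :
    √(y + lam) ≤ (1 + √(lam / ε)) * √(1 + lam / ε) * ((y + lam) ^ (-(1 / 2 : ℝ)) * y) := by
  have hpos : 0 < y + lam := by linarith
  have hC := one_add_le_one_add_sqrt_mul_sqrt_one_add (div_nonneg hlam hε.le)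
  calc √(y + lam) = (y + lam) / √(y + lam) := (Real.div_sqrt).symm
    _ ≤ (1 + √(lam / ε)) * √(1 + lam / ε) * y / √(y + lam) := by
        gcongr
        exact (add_le_one_add_div_mul hε hlam hy).trans (by gcongr; linarith)
    _ = _ := by rw [Real.rpow_neg hpos.le, ← Real.sqrt_eq_rpow]; ring

section LoewnerNorm

variable {𝕜 E : Type*} [RCLike 𝕜] [NormedAddCommGroup E] [InnerProductSpace 𝕜 E] [CompleteSpace E]

theorem ContinuousLinearMap.norm_apply_le_of_star_mul_self_le {T U : E →L[𝕜] E}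
    (h : star T * T ≤ star U * U) (x : E) : ‖T x‖ ≤ ‖U x‖ := by
  have hsq : ‖T x‖ ^ 2 ≤ ‖U x‖ ^ 2 := by
    rw [apply_norm_sq_eq_inner_adjoint_left, apply_norm_sq_eq_inner_adjoint_left,
      ← star_eq_adjoint, ← star_eq_adjoint]
    have := ((le_def _ _).mp h).re_inner_nonneg_left x
    rwa [sub_apply, inner_sub_left, map_sub, sub_nonneg] at this
  exact pow_le_pow_iff_left₀ (norm_nonneg _) (norm_nonneg _) two_ne_zero |>.mp hsq

end LoewnerNorm

section SpectralCalculus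

variable {H : Type*} [NormedAddCommGroup H] [InnerProductSpace ℂ H] [CompleteSpace H]

theorem norm_cfc_apply_le_mul_norm_cfc_apply {S : H →L[ℂ] H}
    {g h : ℝ → ℝ} (hg : ContinuousOn g (spectrum ℝ S)) (hh : ContinuousOn h (spectrum ℝ S))
    {c : ℝ} (hc : 0 ≤ c) (hgh : ∀ x ∈ spectrum ℝ S, |g x| ≤ c * |h x|) (f : H) :
    ‖cfc g S f‖ ≤ c * ‖cfc h S f‖ := by
  have hch : ContinuousOn (fun x => c * h x) (spectrum ℝ S) := continuousOn_const.mul hh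
  calc ‖cfc g S f‖ ≤ ‖cfc (fun x => c * h x) S f‖ := by
        refine ContinuousLinearMap.norm_apply_le_of_star_mul_self_le ?_ f
        rw [IsSelfAdjoint.cfc.star_eq, IsSelfAdjoint.cfc.star_eq, ← cfc_mul g g S,
          ← cfc_mul _ _ S]
        refine cfc_mono fun x hx => ?_
        have habs : |g x| ≤ |c * h x| := by rw [abs_mul, abs_of_nonneg hc]; exact hgh x hx
        simpa only [abs_mul_abs_self] using mul_self_le_mul_self (abs_nonneg _) habs
    _ = c * ‖cfc h S f‖ := by
        rw [cfc_const_mul c h S, smul_apply, norm_smul, Real.norm_of_nonneg hc]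

theorem cfc_mul_id_apply {S : H →L[ℂ] H} (hS : IsSelfAdjoint S) {g : ℝ → ℝ}
    (hg : ContinuousOn g (spectrum ℝ S)) (f : H) :
    cfc (fun x => g x * x) S f = cfc g S (S f) := by
  rw [cfc_mul g (fun x => x) S, cfc_id' ℝ S, mul_apply_eq_comp]

theorem cfc_comp_max_apply_eq {S : H →L[ℂ] H} {ε : ℝ} {f : H}
    (hf : ∀ g : ℝ → ℝ, Continuous g → (∀ x, ε ≤ x → g x = 0) → cfc g S f = 0)
    {g : ℝ → ℝ} (hg : Continuous g) :
    cfc (fun x => g (max x ε)) S f = cfc g S f := by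
  have hgε : Continuous fun x => g (max x ε) := by fun_prop
  rw [← sub_eq_zero, ← sub_apply, ← cfc_sub _ _ S]
  exact hf _ (hgε.sub hg) fun x hx => by simp [max_eq_left hx]

end SpectralCalculus

/-- Let `S` be a bounded nonnegative self-adjoint operator on a Hilbert
space, `λ, ε > 0`, and let `f` lie in the spectral subspace of `S` for `[ε, ∞)`
(equivalently, `g(S) f = 0` for every continuous `g` vanishing on `[ε, ∞)`).  Then
`‖(S+λI)^{1/2} f‖ ≤ (1 + √(λ/ε)) √(1 + λ/ε) ‖(S+λI)^{-1/2} S f‖`. -/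
theorem stmt_11 {H : Type*} [NormedAddCommGroup H] [InnerProductSpace ℂ H]
    [CompleteSpace H] (S : H →L[ℂ] H) (hS : 0 ≤ S)
    (lam ε : ℝ) (hlam : 0 < lam) (hε : 0 < ε) (f : H)
    (hf : ∀ g : ℝ → ℝ, Continuous g → (∀ x, ε ≤ x → g x = 0) → cfc g S f = 0) :
    ‖cfc (fun x : ℝ => Real.sqrt (x + lam)) S f‖ ≤
      (1 + Real.sqrt (lam / ε)) * Real.sqrt (1 + lam / ε) *
        ‖cfc (fun x : ℝ => (x + lam) ^ (-(1/2 : ℝ))) S (S f)‖ := by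
  have hspec : ∀ x ∈ spectrum ℝ S, 0 ≤ x := fun x hx => spectrum_nonneg_of_nonneg hS hx
  -- `(x + λ) ^ (-1/2) * x`, made continuous on all of `ℝ`; it is unchanged on the spectrum.
  set k : ℝ → ℝ := fun x => (max x 0 + lam) ^ (-(1 / 2 : ℝ)) * x
  have hk : Continuous k :=
    (((continuous_id.max continuous_const).add continuous_const).rpow_const
      fun x => Or.inl (add_pos_of_nonneg_of_pos (le_max_right x 0) hlam).ne').mul continuous_id
  have hRHS : cfc (fun x : ℝ => (x + lam) ^ (-(1/2 : ℝ))) S (S f) =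
      cfc (fun x => k (max x ε)) S f := by
    have hcont : ContinuousOn (fun x : ℝ => (x + lam) ^ (-(1/2 : ℝ))) (spectrum ℝ S) :=
      (continuousOn_id.add continuousOn_const).rpow_const
        fun x hx => Or.inl (add_pos_of_nonneg_of_pos (hspec x hx) hlam).ne'
    rw [cfc_comp_max_apply_eq hf hk, ← cfc_mul_id_apply hS.isSelfAdjoint hcont]
    congr 1
    exact cfc_congr fun x hx => by simp only [k, max_eq_left (hspec x hx)]
  rw [← cfc_comp_max_apply_eq hf (g := fun x => √(x + lam)) (by fun_prop), hRHS]
  refine norm_cfc_apply_le_mul_norm_cfc_apply (g := fun x => √(max x ε + lam))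
    (h := fun x => k (max x ε)) (by fun_prop)
    (hk.comp (continuous_id.max continuous_const)).continuousOn (by positivity) (fun x _ => ?_) f
  have hxε : ε ≤ max x ε := le_max_right x ε
  have hkx : k (max x ε) = (max x ε + lam) ^ (-(1 / 2 : ℝ)) * max x ε := by
    simp only [k, max_eq_left (hε.le.trans hxε)]
  rw [abs_of_nonneg (Real.sqrt_nonneg _)]
  exact (hkx ▸ sqrt_add_le_mul_rpow_mul hε hlam.le hxε).trans
    (mul_le_mul_of_nonneg_left (le_abs_self _) (by positivity))
end

section
/- Let (p_m) be orthogonal polynomials normalized by p_m(0) = 1 with respect to [p,q]₁ = ∫ p q u dμ for a finite positive measure μ supported on finitely many points in (0, κ]. Then for each m ≥ 1, p_{m-1}'(0) − p_m'(0) = ([p_{m-1}, p_{m-1}]₀ − [p_m, p_m]₀)/[p^{(2)}_{m-1}, p^{(2)}_{m-1}]₁ ≥ 0; in particular the sequence |p_m'(0)| is nondecreasing in m. -/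
open Polynomial Finset

namespace Stmt19Aux
variable {N : ℕ} (w t : Fin N → ℝ)

/-- The bracket `[p,q]_i`. -/
noncomputable def S (i : ℕ) (p q : ℝ[X]) : ℝ :=
  ∑ j, w j * p.eval (t j) * q.eval (t j) * t j ^ i

lemma S_symm (i : ℕ) (p q : ℝ[X]) : S w t i p q = S w t i q p := by
  unfold S; exact Finset.sum_congr rfl fun j _ => by ring

lemma S_add_right (i : ℕ) (p q r : ℝ[X]) :
    S w t i p (q + r) = S w t i p q + S w t i p r := by
  unfold S; rw [← Finset.sum_add_distrib]
  exact Finset.sum_congr rfl fun j _ => by simp [eval_add]; ring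

lemma S_sub_right (i : ℕ) (p q r : ℝ[X]) :
    S w t i p (q - r) = S w t i p q - S w t i p r := by
  unfold S; rw [← Finset.sum_sub_distrib]
  exact Finset.sum_congr rfl fun j _ => by simp [eval_sub]; ring

lemma S_C_mul_right (i : ℕ) (a : ℝ) (p q : ℝ[X]) :
    S w t i p (C a * q) = a * S w t i p q := by
  unfold S; rw [Finset.mul_sum]
  exact Finset.sum_congr rfl fun j _ => by simp [eval_mul]; ring

lemma S_zero_right (i : ℕ) (p : ℝ[X]) : S w t i p 0 = 0 := by
  unfold S; simp

lemma S_mul_X_right (i : ℕ) (p q : ℝ[X]) :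
    S w t i p (X * q) = S w t (i + 1) p q := by
  unfold S; exact Finset.sum_congr rfl fun j _ => by simp [eval_mul, pow_succ]; ring

lemma S_nonneg (hw : ∀ j, 0 < w j) (ht0 : ∀ j, 0 < t j) (i : ℕ) (p : ℝ[X]) :
    0 ≤ S w t i p p := by
  refine Finset.sum_nonneg fun j _ => ?_
  have h1 := (hw j).le
  have h2 := pow_nonneg (ht0 j).le i
  nlinarith [mul_nonneg (mul_nonneg h1 (mul_self_nonneg (p.eval (t j)))) h2]

lemma eval_eq_zero_of_S_eq_zero (hw : ∀ j, 0 < w j) (ht0 : ∀ j, 0 < t j) (i : ℕ)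
    (p : ℝ[X]) (h : S w t i p p = 0) (j : Fin N) : p.eval (t j) = 0 := by
  have hterm : ∀ k ∈ Finset.univ, (0:ℝ) ≤ w k * p.eval (t k) * p.eval (t k) * t k ^ i :=
    fun k _ => by
      nlinarith [mul_nonneg (mul_nonneg (hw k).le (mul_self_nonneg (p.eval (t k))))
        (pow_nonneg (ht0 k).le i)]
  have := (Finset.sum_eq_zero_iff_of_nonneg hterm).mp h j (Finset.mem_univ j)
  by_contra hne
  have he : 0 < p.eval (t j) * p.eval (t j) := mul_self_pos.mpr hne
  nlinarith [mul_pos (mul_pos (hw j) he) (pow_pos (ht0 j) i)]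

lemma vanish (htinj : Function.Injective t) (p : ℝ[X]) (hd : p.natDegree < N)
    (h : ∀ j, p.eval (t j) = 0) : p = 0 := by
  exact eq_zero_of_natDegree_lt_card_of_eval_eq_zero p htinj h (by simpa using hd)

/-- `p` is the level-`n` orthogonal polynomial: degree ≤ n, constant term 1,
and `B₁`-orthogonal to all polynomials of lower degree. -/
def Ortho (n : ℕ) (p : ℝ[X]) : Prop :=
  p.natDegree ≤ n ∧ p.coeff 0 = 1 ∧
    ∀ u : ℝ[X], u.degree < (n : WithBot ℕ) → S w t 1 p u = 0

lemma S_sum_right {ι : Type*} (i : ℕ) (p : ℝ[X]) (s : Finset ι) (f : ι → ℝ[X]) :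
    S w t i p (∑ x ∈ s, f x) = ∑ x ∈ s, S w t i p (f x) := by
  unfold S
  have hk : ∀ k : Fin N, w k * p.eval (t k) * (∑ x ∈ s, (f x).eval (t k)) * t k ^ i
      = ∑ x ∈ s, w k * p.eval (t k) * (f x).eval (t k) * t k ^ i := by
    intro k
    rw [Finset.mul_sum, Finset.sum_mul]
  simp_rw [eval_finset_sum, hk]
  exact Finset.sum_comm

lemma min_of_ortho (hw : ∀ j, 0 < w j) (ht0 : ∀ j, 0 < t j) {n : ℕ} {p : ℝ[X]}
    (hp : Ortho w t n p) {q : ℝ[X]} (hqd : q.natDegree ≤ n) (hq0 : q.coeff 0 = 1) :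
    S w t 0 p p ≤ S w t 0 q q := by
  obtain ⟨hpd, hp0, horth⟩ := hp
  set d := q - p with hd
  by_cases hd0 : d = 0
  · have : q = p := by rwa [sub_eq_zero] at hd0
    rw [this]
  · have hdc : d.coeff 0 = 0 := by simp [hd, coeff_sub, hq0, hp0]
    have hdX : d = X * d.divX := by
      conv_lhs => rw [← divX_mul_X_add d]
      rw [hdc, map_zero, add_zero, mul_comm]
    have hdeg : d.divX.degree < (n : WithBot ℕ) := by
      have h1 : d.divX.degree < d.degree := degree_divX_lt hd0
      have h2 : d.degree ≤ (n : WithBot ℕ) := by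
        refine le_trans (degree_sub_le q p) ?_
        simp only [max_le_iff]
        exact ⟨natDegree_le_iff_degree_le.mp hqd, natDegree_le_iff_degree_le.mp hpd⟩
      exact lt_of_lt_of_le h1 h2
    have hcross : S w t 0 p d = 0 := by
      rw [hdX, S_mul_X_right]
      exact horth _ hdeg
    have hq : q = p + d := by rw [hd]; ring
    have hexp : S w t 0 q q = S w t 0 p p + 2 * S w t 0 p d + S w t 0 d d := by
      rw [hq]
      rw [show S w t 0 (p + d) (p + d) = S w t 0 (p+d) p + S w t 0 (p+d) d from
        S_add_right w t 0 (p+d) p d]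
      rw [S_symm w t 0 (p+d) p, S_symm w t 0 (p+d) d, S_add_right, S_add_right,
        S_symm w t 0 d p]
      ring
    have := S_nonneg w t hw ht0 0 d
    rw [hexp, hcross]
    linarith

lemma ortho_of_min (hw : ∀ j, 0 < w j) (ht0 : ∀ j, 0 < t j) {n : ℕ} {p : ℝ[X]}
    (hpd : p.natDegree ≤ n) (hp0 : p.coeff 0 = 1)
    (hmin : ∀ q : ℝ[X], q.natDegree ≤ n → q.coeff 0 = 1 → S w t 0 p p ≤ S w t 0 q q) :
    Ortho w t n p := by
  refine ⟨hpd, hp0, fun u hu => ?_⟩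
  by_cases hu0 : u = 0
  · rw [hu0]; exact S_zero_right w t 1 p
  · set c := S w t 1 p u with hc
    set dd := S w t 2 u u with hdd
    have hdnn : 0 ≤ dd := S_nonneg w t hw ht0 2 u
    -- feasibility of p + ε (X * u)
    have key : ∀ ε : ℝ, 0 ≤ 2 * ε * c + ε ^ 2 * dd := by
      intro ε
      have hdeg : (C ε * (X * u)).natDegree ≤ n := by
        refine le_trans (natDegree_mul_le) ?_
        refine le_trans (add_le_add (natDegree_C ε).le (natDegree_mul_le (p := X) (q := u))) ?_
        simp only [natDegree_X, zero_add]
        have : u.natDegree < n := (natDegree_lt_iff_degree_lt hu0).mpr (by exact_mod_cast hu)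
        omega
      have hfeas : (p + C ε * (X * u)).natDegree ≤ n := le_trans (natDegree_add_le _ _) (by omega)
      have hfc : (p + C ε * (X * u)).coeff 0 = 1 := by
        simp [coeff_add, hp0, mul_coeff_zero, coeff_X_zero]
      have h := hmin _ hfeas hfc
      have hexp : S w t 0 (p + C ε * (X*u)) (p + C ε * (X*u))
          = S w t 0 p p + 2 * ε * c + ε ^ 2 * dd := by
        rw [hc, hdd]
        unfold S
        simp only [Finset.mul_sum]
        rw [← Finset.sum_add_distrib, ← Finset.sum_add_distrib]
        refine Finset.sum_congr rfl fun j _ => ?_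
        simp only [eval_add, eval_mul, eval_C, eval_X, pow_succ, pow_zero, one_mul, pow_one]
        ring
      rw [hexp] at h
      linarith
    -- conclude c = 0
    by_contra hc0
    have h := key (-c / (dd + 1))
    have hd1 : (0:ℝ) < dd + 1 := by linarith
    have : 2 * (-c / (dd+1)) * c + (-c/(dd+1))^2 * dd
        = -(c^2) * (dd + 2) / (dd+1)^2 := by field_simp; ring
    rw [this] at h
    have hc2 : 0 < c^2 := by positivity
    have : -(c^2) * (dd+2) / (dd+1)^2 < 0 := by
      apply div_neg_of_neg_of_pos
      · nlinarith
      · positivity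
    linarith

lemma degree_lt_succ_of_natDegree_le {p : ℝ[X]} {k : ℕ} (h : p.natDegree ≤ k) :
    p.degree < ((k + 1 : ℕ) : WithBot ℕ) :=
  lt_of_le_of_lt (le_trans degree_le_natDegree (WithBot.coe_le_coe.mpr h))
    (WithBot.coe_lt_coe.mpr (Nat.lt_succ_self k))

lemma step (hw : ∀ j, 0 < w j) (ht0 : ∀ j, 0 < t j) (htinj : Function.Injective t)
    {n : ℕ} (hn : n + 2 ≤ N) {p P : ℝ[X]}
    (hp : Ortho w t n p) (hP : Ortho w t (n + 1) P)
    (hE : S w t 0 P P ≤ S w t 0 p p) :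
    P.coeff 1 ≤ p.coeff 1 := by
  obtain ⟨hpd, hp0, hop⟩ := hp
  obtain ⟨hPd, hP0, hoP⟩ := hP
  set d := P - p with hddef
  set s := d.divX with hsdef
  have hd0 : d.coeff 0 = 0 := by simp [hddef, coeff_sub, hP0, hp0]
  have hdX : d = X * s := by
    conv_lhs => rw [← divX_mul_X_add d]
    rw [hd0, map_zero, add_zero, mul_comm]
  have hsnd : s.natDegree ≤ n := by
    by_cases hdd : d = 0
    · simp [hsdef, hdd]
    · have h1 : s.degree < d.degree := degree_divX_lt hdd
      have h2 : d.degree ≤ ((n + 1 : ℕ) : WithBot ℕ) := by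
        refine le_trans (degree_sub_le P p) ?_
        simp only [max_le_iff]
        exact ⟨natDegree_le_iff_degree_le.mp hPd,
          le_trans (natDegree_le_iff_degree_le.mp hpd) (by exact_mod_cast Nat.le_succ n)⟩
      by_cases hs0 : s = 0
      · simp [hs0]
      · have := (natDegree_lt_iff_degree_lt hs0).mpr (lt_of_lt_of_le h1 h2)
        omega
  -- B2-orthogonality of s against degrees < n
  have hs2 : ∀ u : ℝ[X], u.degree < (n : WithBot ℕ) → S w t 2 s u = 0 := by
    intro u hu
    have hun1 : u.degree < ((n + 1 : ℕ) : WithBot ℕ) :=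
      lt_of_lt_of_le hu (by exact_mod_cast Nat.le_succ n)
    have h1 : S w t 1 u d = S w t 2 u s := by rw [hdX, S_mul_X_right]
    have h2 : S w t 1 u d = S w t 1 u P - S w t 1 u p := by
      rw [hddef, S_sub_right]
    rw [S_symm w t 1 u P, S_symm w t 1 u p, hoP u hun1, hop u hu, sub_zero] at h2
    rw [S_symm w t 2 s u, ← h1, h2]
  set v := s.divX with hvdef
  have hvdeg : v.degree < (n : WithBot ℕ) := by
    by_cases hs0 : s = 0
    · simp only [hvdef, hs0, divX_zero, degree_zero]
      exact WithBot.bot_lt_coe n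
    · exact lt_of_lt_of_le (degree_divX_lt hs0) (natDegree_le_iff_degree_le.mp hsnd)
  have hp0' : p ≠ 0 := fun h => by simp [h] at hp0
  set g := p.divX with hgdef
  have hgdeg : g.degree < (n : WithBot ℕ) :=
    lt_of_lt_of_le (degree_divX_lt hp0') (natDegree_le_iff_degree_le.mp hpd)
  set c0 := s.coeff 0 with hc0
  -- h6 : S 1 s s = c0 * S 1 s 1
  have hsplit : X * v + C c0 = s := by rw [mul_comm]; exact divX_mul_X_add s
  have h6 : S w t 1 s s = c0 * S w t 1 s 1 := by
    have hv0 : S w t (1+1) s v = 0 := hs2 v hvdeg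
    rw [show S w t 1 s s = S w t 1 s (X * v + C c0) from by rw [hsplit],
      S_add_right, S_mul_X_right, hv0,
      show (C c0 : ℝ[X]) = C c0 * 1 from (mul_one _).symm, S_C_mul_right]
    ring
  -- h3 : S 1 s p = S 1 s 1
  have hpsplit : X * g + C (1:ℝ) = p := by
    rw [mul_comm, ← hp0]; exact divX_mul_X_add p
  have h3 : S w t 1 s p = S w t 1 s 1 := by
    have hg0 : S w t (1+1) s g = 0 := hs2 g hgdeg
    rw [show S w t 1 s p = S w t 1 s (X * g + C 1) from by rw [hpsplit],
      S_add_right, S_mul_X_right, hg0,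
      show (C (1:ℝ) : ℝ[X]) = C 1 * 1 from (mul_one _).symm, S_C_mul_right]
    ring
  -- h4 : S 1 s P = 0
  have hsdeglt : s.degree < ((n + 1 : ℕ) : WithBot ℕ) := degree_lt_succ_of_natDegree_le hsnd
  have h4 : S w t 1 s P = 0 := by rw [S_symm]; exact hoP s hsdeglt
  -- h5 : S 0 P P - S 0 p p = S 1 s P + S 1 s p
  have h5 : S w t 0 P P - S w t 0 p p = S w t 1 s P + S w t 1 s p := by
    have e1 : ∀ q : ℝ[X], S w t 1 s q = S w t 0 q d := by
      intro q
      rw [hdX, S_mul_X_right w t 0 q s, S_symm w t 1 q s]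
    rw [e1 P, e1 p, hddef, S_sub_right, S_sub_right, S_symm w t 0 P p]
    ring
  have hs1 : S w t 1 s 1 = S w t 0 P P - S w t 0 p p := by rw [h5, h4, h3, zero_add]
  have hs1np : S w t 1 s 1 ≤ 0 := by rw [hs1]; linarith
  have h7 : 0 ≤ S w t 1 s s := S_nonneg w t hw ht0 1 s
  have hcoeff : P.coeff 1 - p.coeff 1 = c0 := by
    have : d.coeff 1 = c0 := by
      rw [hdX, mul_comm, coeff_mul_X s 0]
    rw [← this, hddef, coeff_sub]
  rcases lt_or_eq_of_le hs1np with hneg | hzero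
  · have : c0 ≤ 0 := by nlinarith [h6, h7]
    linarith [hcoeff, this]
  · have hss : S w t 1 s s = 0 := by rw [h6, hzero, mul_zero]
    have hs0 : s = 0 := by
      refine vanish t htinj s (by omega) ?_
      exact eval_eq_zero_of_S_eq_zero w t hw ht0 1 s hss
    have : c0 = 0 := by rw [hc0, hs0, coeff_zero]
    linarith [hcoeff, this]

lemma S_monomial (a b e : ℕ) : S w t e (X ^ a) (X ^ b) = ∑ k, w k * t k ^ (a + b + e) := by
  unfold S
  refine Finset.sum_congr rfl fun k _ => ?_
  simp only [eval_pow, eval_X]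
  rw [pow_add, pow_add]; ring

lemma S_one_right_mono (a e : ℕ) : S w t e (X ^ a) 1 = ∑ k, w k * t k ^ (a + e) := by
  rw [show (1 : ℝ[X]) = X ^ 0 from (pow_zero X).symm, S_monomial]
  simp
lemma exists_ortho (hw : ∀ j, 0 < w j) (ht0 : ∀ j, 0 < t j) (htinj : Function.Injective t)
    (n : ℕ) (hn : n ≤ N) : ∃ p : ℝ[X], Ortho w t n p := by
  rcases Nat.eq_zero_or_pos n with hn0 | hn1
  · subst hn0
    refine ⟨1, by simp, by simp, fun u hu => ?_⟩
    have hu0 : u = 0 :=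
      degree_eq_bot.mp (Nat.WithBot.lt_zero_iff.mp (by exact_mod_cast hu))
    rw [hu0]; exact S_zero_right w t 1 1
  · set A : Matrix (Fin n) (Fin n) ℝ :=
      fun i j => ∑ k, w k * t k ^ ((i:ℕ) + (j:ℕ) + 2) with hA
    set b : Fin n → ℝ := fun i => -∑ k, w k * t k ^ ((i:ℕ) + 1) with hb
    have hmv : ∀ (x : Fin n → ℝ) (i : Fin n),
        A.mulVec x i = ∑ j : Fin n, (∑ k, w k * t k ^ ((i:ℕ) + (j:ℕ) + 2)) * x j := by
      intro x i
      simp [Matrix.mulVec, dotProduct, hA]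
    -- kernel is trivial
    have hker : ∀ x : Fin n → ℝ, A.mulVec x = 0 → x = 0 := by
      intro x hx
      set q : ℝ[X] := ∑ i : Fin n, C (x i) * X ^ (i:ℕ) with hq
      have hqd : q.natDegree < N := by
        have : q.natDegree ≤ n - 1 := by
          refine natDegree_sum_le_of_forall_le _ _ fun i _ => ?_
          refine le_trans natDegree_mul_le ?_
          simp only [natDegree_C, natDegree_X_pow, zero_add]
          omega
        omega
      have hSq : S w t 2 q q = ∑ i : Fin n, x i * A.mulVec x i := by
        rw [show S w t 2 q q = ∑ i : Fin n, x i * S w t 2 (X ^ (i:ℕ)) q from by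
          rw [hq, S_sum_right]
          refine Finset.sum_congr rfl fun i _ => ?_
          rw [S_C_mul_right, S_symm w t 2 _ q]]
        refine Finset.sum_congr rfl fun i _ => ?_
        rw [hmv x i, hq, S_sum_right, Finset.mul_sum, Finset.mul_sum]
        refine Finset.sum_congr rfl fun j _ => ?_
        rw [S_C_mul_right, S_monomial]
        ring
      rw [hx] at hSq
      simp only [Pi.zero_apply, mul_zero, Finset.sum_const_zero] at hSq
      have hq0 : q = 0 := vanish t htinj q hqd
        (eval_eq_zero_of_S_eq_zero w t hw ht0 2 q hSq)
      funext i
      have : q.coeff (i:ℕ) = x i := by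
        rw [hq, finset_sum_coeff]
        rw [Finset.sum_eq_single i]
        · simp
        · intro l _ hne
          rw [coeff_C_mul, coeff_X_pow, if_neg (fun h => hne (Fin.ext h.symm)), mul_zero]
        · intro h; exact absurd (Finset.mem_univ i) h
      rw [hq0] at this
      simpa using this.symm
    have hinj : Function.Injective A.mulVecLin := by
      rw [← LinearMap.ker_eq_bot, LinearMap.ker_eq_bot']
      intro x hx0
      exact hker x (by simpa using hx0)
    obtain ⟨c, hc⟩ := LinearMap.injective_iff_surjective.mp hinj b
    have hcb : A.mulVec c = b := by simpa using hc
    set s : ℝ[X] := ∑ i : Fin n, C (c i) * X ^ (i:ℕ) with hs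
    have hsd : s.natDegree ≤ n - 1 := by
      refine natDegree_sum_le_of_forall_le _ _ fun i _ => ?_
      refine le_trans natDegree_mul_le ?_
      simp only [natDegree_C, natDegree_X_pow, zero_add]
      omega
    refine ⟨1 + X * s, ?_, ?_, ?_⟩
    · refine le_trans (natDegree_add_le _ _) ?_
      have h2 : (X * s).natDegree ≤ 1 + (n-1) := le_trans natDegree_mul_le
        (by simp only [natDegree_X]; omega)
      simp only [natDegree_one]
      omega
    · simp [mul_coeff_zero]
    · intro u hu
      -- first: orthogonality against monomials X^l, l < n
      have hmono : ∀ i : Fin n, S w t 1 (1 + X * s) (X ^ (i:ℕ)) = 0 := by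
        intro i
        rw [S_symm, S_add_right, S_mul_X_right, S_one_right_mono]
        rw [show S w t (1+1) (X ^ (i:ℕ)) s = ∑ j : Fin n, (∑ k, w k * t k ^ ((i:ℕ)+(j:ℕ)+2)) * c j from by
          rw [hs, S_sum_right]
          refine Finset.sum_congr rfl fun j _ => ?_
          rw [S_C_mul_right, S_monomial]
          ring]
        rw [← hmv c i, hcb, hb]
        simp
      -- now general u of degree < n
      by_cases hu0 : u = 0
      · rw [hu0]; exact S_zero_right w t 1 _
      · have hund : u.natDegree < n := (natDegree_lt_iff_degree_lt hu0).mpr (by exact_mod_cast hu)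
        have husum : u = ∑ l ∈ Finset.range n, C (u.coeff l) * X ^ l := by
          conv_lhs => rw [as_sum_range' u n hund]
          exact Finset.sum_congr rfl fun l _ => (C_mul_X_pow_eq_monomial).symm
        rw [show S w t 1 (1 + X * s) u = ∑ l ∈ Finset.range n, (u.coeff l) * S w t 1 (1 + X*s) (X ^ l) from by
          conv_lhs => rw [husum]
          rw [S_sum_right]
          exact Finset.sum_congr rfl fun l _ => S_C_mul_right w t 1 _ _ _]
        refine Finset.sum_eq_zero fun l hl => ?_
        rw [hmono ⟨l, Finset.mem_range.mp hl⟩]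
        simp

lemma coeff1_nonpos (hw : ∀ j, 0 < w j) (ht0 : ∀ j, 0 < t j)
    (htinj : Function.Injective t) :
    ∀ n : ℕ, n + 1 ≤ N → ∀ p : ℝ[X], Ortho w t n p → p.coeff 1 ≤ 0 := by
  intro n
  induction n with
  | zero =>
    intro _ p hp
    have : p.coeff 1 = 0 := coeff_eq_zero_of_natDegree_lt (lt_of_le_of_lt hp.1 one_pos)
    exact le_of_eq this
  | succ n ih =>
    intro hn P hP
    obtain ⟨p, hp⟩ := exists_ortho w t hw ht0 htinj n (by omega)
    have hE : S w t 0 P P ≤ S w t 0 p p :=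
      min_of_ortho w t hw ht0 hP (le_trans hp.1 (Nat.le_succ n)) hp.2.1
    exact le_trans (step w t hw ht0 htinj (by omega) hp hP hE) (ih (by omega) p hp)

end Stmt19Aux

open Stmt19Aux in
/-- Let `μ = ∑ⱼ wⱼ δ_{tⱼ}` be a finite positive measure supported on
`N ≥ m+1` distinct points of `(0, κ]`, with brackets
`[p,q]ᵢ = ∑ⱼ wⱼ p(tⱼ) q(tⱼ) tⱼ^i`.  Let `p_m` (resp. `p_{m−1}`) be the polynomial of
degree `≤ m` (resp. `≤ m−1`) with constant term `1` minimizing `[p,p]₀` (equivalently,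
orthogonal to lower degrees w.r.t. `[·,·]₁`).  Then `p_m'(0) ≤ p_{m−1}'(0) ≤ 0`,
i.e. `|p_m'(0)|` is nondecreasing in `m`. -/
theorem stmt_19 (κ : ℝ) (N : ℕ) (w t : Fin N → ℝ)
    (hw : ∀ j, 0 < w j) (ht : ∀ j, t j ∈ Set.Ioc 0 κ) (htinj : Function.Injective t)
    (m : ℕ) (hm : 1 ≤ m) (hN : m + 1 ≤ N)
    (B : ℕ → Polynomial ℝ → Polynomial ℝ → ℝ)
    (hB : ∀ i p q, B i p q = ∑ j, w j * p.eval (t j) * q.eval (t j) * (t j) ^ i)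
    (pm pm1 : Polynomial ℝ)
    (hpmdeg : pm.natDegree ≤ m) (hpm0 : pm.coeff 0 = 1)
    (hpmmin : ∀ q : Polynomial ℝ, q.natDegree ≤ m → q.coeff 0 = 1 →
      B 0 pm pm ≤ B 0 q q)
    (hpm1deg : pm1.natDegree ≤ m - 1) (hpm10 : pm1.coeff 0 = 1)
    (hpm1min : ∀ q : Polynomial ℝ, q.natDegree ≤ m - 1 → q.coeff 0 = 1 →
      B 0 pm1 pm1 ≤ B 0 q q) :
    (Polynomial.derivative pm).eval 0 ≤ (Polynomial.derivative pm1).eval 0 ∧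
      (Polynomial.derivative pm1).eval 0 ≤ 0 := by
  have ht0 : ∀ j, 0 < t j := fun j => (ht j).1
  have hSB : ∀ i p q, B i p q = S w t i p q := fun i p q => hB i p q
  have hder : ∀ q : Polynomial ℝ, (Polynomial.derivative q).eval 0 = q.coeff 1 := by
    intro q
    rw [← coeff_zero_eq_eval_zero, coeff_derivative]
    norm_num
  have hOm : Ortho w t m pm := by
    refine ortho_of_min w t hw ht0 hpmdeg hpm0 fun q h1 h2 => ?_
    rw [← hSB, ← hSB]; exact hpmmin q h1 h2
  have hOm1 : Ortho w t (m - 1) pm1 := by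
    refine ortho_of_min w t hw ht0 hpm1deg hpm10 fun q h1 h2 => ?_
    rw [← hSB, ← hSB]; exact hpm1min q h1 h2
  have hmm : m - 1 + 1 = m := by omega
  have hOm' : Ortho w t (m - 1 + 1) pm := by rw [hmm]; exact hOm
  have hE : S w t 0 pm pm ≤ S w t 0 pm1 pm1 := by
    rw [← hSB, ← hSB]
    exact hpmmin pm1 (le_trans hpm1deg (by omega)) hpm10
  have h1 : pm.coeff 1 ≤ pm1.coeff 1 :=
    step w t hw ht0 htinj (by omega) hOm1 hOm' hE
  have h2 : pm1.coeff 1 ≤ 0 :=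
    coeff1_nonpos w t hw ht0 htinj (m - 1) (by omega) pm1 hOm1
  rw [hder pm, hder pm1]
  exact ⟨h1, h2⟩
end
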